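/- arXiv:2502.18131 — 3 statements merged into one kernel-verified Lean document; each statement's English description precedes it below -/
import Mathlib

section
/- Let σ > 0 and ε ∈ ℝ, let V : ℝ → ℝ be twice differentiable, let h : ℝ → ℝ, and define p̂(x) = exp(−(2/σ²) V(x)). Let κ : ℝ × ℝ → ℝ be such that all partial derivatives appearing below exist, and suppose κ satisfies ∂κ/∂t (t,x) = −V'(x) ∂κ/∂x (t,x) + (σ²/2) ∂²κ/∂x² (t,x) + (2/σ²) V'(x) h(t) for all t, x. Then the function p̃(t,x) = p̂(x) + ε p̂(x) κ(t,x) satisfies ∂p̃/∂t (t,x) = ∂/∂x [V'(x) p̃(t,x)] + (σ²/2) ∂²p̃/∂x² (t,x) − ε p̂'(x) h(t) for all t, x. -/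
/-- The stationary solution `p̂(x) = exp(−(2/σ²) V(x))` of the unperturbed
Fokker–Planck equation. -/
noncomputable def phat (σ : ℝ) (V : ℝ → ℝ) : ℝ → ℝ :=
  fun x => Real.exp (-(2 / σ ^ 2) * V x)

/-- The first-order approximate solution `p̃(t,x) = p̂(x) + ε p̂(x) κ(t,x)`. -/
noncomputable def ptilde (σ ε : ℝ) (V : ℝ → ℝ) (κ : ℝ → ℝ → ℝ) : ℝ → ℝ → ℝ :=
  fun t x => phat σ V x + ε * phat σ V x * κ t x

lemma phat_hasDerivAt (σ : ℝ) (V : ℝ → ℝ) (hV : Differentiable ℝ V) (x : ℝ) :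
    HasDerivAt (phat σ V) (phat σ V x * (-(2 / σ ^ 2) * deriv V x)) x := by
  have h1 : HasDerivAt (fun y => -(2 / σ ^ 2) * V y) (-(2 / σ ^ 2) * deriv V x) x :=
    ((hV x).hasDerivAt).const_mul _
  have h2 := h1.exp
  show HasDerivAt (fun x => Real.exp (-(2 / σ ^ 2) * V x)) _ x
  convert h2 using 1
  rfl

/-- If `κ` solves `∂κ/∂t = −V' ∂κ/∂x + (σ²/2) ∂²κ/∂x² + (2/σ²) V' h(t)`, then
`p̃ = p̂ + ε p̂ κ` satisfies
`∂p̃/∂t = ∂/∂x [V'(x) p̃] + (σ²/2) ∂²p̃/∂x² − ε p̂'(x) h(t)`. -/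
theorem approximate_solution_equation
    (σ ε : ℝ) (hσ : 0 < σ) (V h : ℝ → ℝ) (κ : ℝ → ℝ → ℝ)
    (hV : Differentiable ℝ V) (hV' : Differentiable ℝ (deriv V))
    (hκt : ∀ x : ℝ, Differentiable ℝ (fun t => κ t x))
    (hκx : ∀ t : ℝ, Differentiable ℝ (κ t))
    (hκxx : ∀ t : ℝ, Differentiable ℝ (deriv (κ t)))
    (hκpde : ∀ t x : ℝ,
      deriv (fun s => κ s x) t
        = -deriv V x * deriv (κ t) x + σ ^ 2 / 2 * deriv (deriv (κ t)) x
          + 2 / σ ^ 2 * deriv V x * h t) :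
    ∀ t x : ℝ,
      deriv (fun s => ptilde σ ε V κ s x) t
        = deriv (fun y => deriv V y * ptilde σ ε V κ t y) x
          + σ ^ 2 / 2 * deriv (deriv (ptilde σ ε V κ t)) x
          - ε * deriv (phat σ V) x * h t := by
  intro t x
  have hσ2 : σ ^ 2 ≠ 0 := pow_ne_zero 2 (ne_of_gt hσ)
  have hph : ∀ y : ℝ, HasDerivAt (phat σ V)
      (phat σ V y * (-(2 / σ ^ 2) * deriv V y)) y := phat_hasDerivAt σ V hV
  -- first spatial derivative of ptilde
  have hpx : ∀ y : ℝ, HasDerivAt (ptilde σ ε V κ t)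
      (phat σ V y * (-(2 / σ ^ 2) * deriv V y)
        + (ε * (phat σ V y * (-(2 / σ ^ 2) * deriv V y)) * κ t y
            + ε * phat σ V y * deriv (κ t) y)) y := by
    intro y
    have h2 : HasDerivAt (fun z => ε * phat σ V z * κ t z)
        (ε * (phat σ V y * (-(2 / σ ^ 2) * deriv V y)) * κ t y
          + ε * phat σ V y * deriv (κ t) y) y :=
      ((hph y).const_mul ε).mul (hκx t y).hasDerivAt
    have h3 := (hph y).add h2
    exact h3
  have hderiv1 : deriv (ptilde σ ε V κ t) = fun y =>
      phat σ V y * (-(2 / σ ^ 2) * deriv V y)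
        + (ε * (phat σ V y * (-(2 / σ ^ 2) * deriv V y)) * κ t y
            + ε * phat σ V y * deriv (κ t) y) :=
    funext fun y => (hpx y).deriv
  -- second spatial derivative of ptilde
  have hA : HasDerivAt (fun y => phat σ V y * (-(2 / σ ^ 2) * deriv V y))
      (phat σ V x * (-(2 / σ ^ 2) * deriv V x) * (-(2 / σ ^ 2) * deriv V x)
        + phat σ V x * (-(2 / σ ^ 2) * deriv (deriv V) x)) x :=
    (hph x).mul (((hV' x).hasDerivAt).const_mul _)
  have hB : HasDerivAt (fun y => ε * (phat σ V y * (-(2 / σ ^ 2) * deriv V y)) * κ t y)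
      (ε * (phat σ V x * (-(2 / σ ^ 2) * deriv V x) * (-(2 / σ ^ 2) * deriv V x)
          + phat σ V x * (-(2 / σ ^ 2) * deriv (deriv V) x)) * κ t x
        + ε * (phat σ V x * (-(2 / σ ^ 2) * deriv V x)) * deriv (κ t) x) x :=
    (hA.const_mul ε).mul (hκx t x).hasDerivAt
  have hC : HasDerivAt (fun y => ε * phat σ V y * deriv (κ t) y)
      (ε * (phat σ V x * (-(2 / σ ^ 2) * deriv V x)) * deriv (κ t) x
        + ε * phat σ V x * deriv (deriv (κ t)) x) x :=
    ((hph x).const_mul ε).mul (hκxx t x).hasDerivAt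
  have hsecond : deriv (deriv (ptilde σ ε V κ t)) x =
      (phat σ V x * (-(2 / σ ^ 2) * deriv V x) * (-(2 / σ ^ 2) * deriv V x)
        + phat σ V x * (-(2 / σ ^ 2) * deriv (deriv V) x))
      + ((ε * (phat σ V x * (-(2 / σ ^ 2) * deriv V x) * (-(2 / σ ^ 2) * deriv V x)
          + phat σ V x * (-(2 / σ ^ 2) * deriv (deriv V) x)) * κ t x
        + ε * (phat σ V x * (-(2 / σ ^ 2) * deriv V x)) * deriv (κ t) x)
        + (ε * (phat σ V x * (-(2 / σ ^ 2) * deriv V x)) * deriv (κ t) x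
        + ε * phat σ V x * deriv (deriv (κ t)) x)) := by
    rw [hderiv1]
    exact (hA.add (hB.add hC)).deriv
  -- derivative of V' * ptilde
  have hG : deriv (fun y => deriv V y * ptilde σ ε V κ t y) x =
      deriv (deriv V) x * ptilde σ ε V κ t x
        + deriv V x * (phat σ V x * (-(2 / σ ^ 2) * deriv V x)
        + (ε * (phat σ V x * (-(2 / σ ^ 2) * deriv V x)) * κ t x
            + ε * phat σ V x * deriv (κ t) x)) :=
    (((hV' x).hasDerivAt).mul (hpx x)).deriv
  -- time derivative
  have hTd : deriv (fun s => ptilde σ ε V κ s x) t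
      = ε * phat σ V x * deriv (fun s => κ s x) t := by
    have h4 : HasDerivAt (fun s => phat σ V x + ε * phat σ V x * κ s x)
        (ε * phat σ V x * deriv (fun s => κ s x) t) t :=
      (((hκt x t).hasDerivAt.const_mul (ε * phat σ V x))).const_add _
    have h5 : (fun s => ptilde σ ε V κ s x)
        = fun s => phat σ V x + ε * phat σ V x * κ s x := by
      funext s; simp [ptilde]
    rw [h5]
    exact h4.deriv
  rw [hTd, hG, hsecond, (hph x).deriv, hκpde t x]
  simp only [ptilde]
  field_simp
  ring
end

section
/- Let σ > 0 and ε ∈ ℝ, let V : ℝ → ℝ be twice differentiable, let h : ℝ → ℝ, and define p̂(x) = exp(−(2/σ²) V(x)). Let κ : ℝ × ℝ → ℝ satisfy ∂κ/∂t = −V'(x) ∂κ/∂x + (σ²/2) ∂²κ/∂x² + (2/σ²) V'(x) h(t), and set p̃(t,x) = p̂(x) + ε p̂(x) κ(t,x). Suppose p : ℝ × ℝ → ℝ satisfies the perturbed Fokker–Planck equation ∂p/∂t = −∂/∂x [(−V'(x) + ε h(t)) p] + (σ²/2) ∂²p/∂x², with all the partial derivatives appearing here assumed to exist. Then the error q(t,x)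 = p(t,x) − p̃(t,x) satisfies ∂q/∂t (t,x) = ∂/∂x [V'(x) q(t,x)] + (σ²/2) ∂²q/∂x² (t,x) − ε h(t) ∂q/∂x (t,x) − ε² h(t) [p̂'(x) κ(t,x) + p̂(x) ∂κ/∂x (t,x)] for all t, x. -/
set_option maxHeartbeats 1000000 in
/-- If `p` solves the perturbed Fokker–Planck equation
`∂p/∂t = −∂/∂x [(−V'(x) + ε h(t)) p] + (σ²/2) ∂²p/∂x²` and `κ` solves
`∂κ/∂t = −V' ∂κ/∂x + (σ²/2) ∂²κ/∂x² + (2/σ²) V' h(t)`, then the error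
`q = p − p̃` satisfies
`∂q/∂t = ∂/∂x [V'(x) q] + (σ²/2) ∂²q/∂x² − ε h(t) ∂q/∂x
  − ε² h(t) [p̂'(x) κ + p̂(x) ∂κ/∂x]`. -/
theorem error_equation
    (σ ε : ℝ) (hσ : 0 < σ) (V h : ℝ → ℝ) (κ p : ℝ → ℝ → ℝ)
    (hV : Differentiable ℝ V) (hV' : Differentiable ℝ (deriv V))
    (hκt : ∀ x : ℝ, Differentiable ℝ (fun t => κ t x))
    (hκx : ∀ t : ℝ, Differentiable ℝ (κ t))
    (hκxx : ∀ t : ℝ, Differentiable ℝ (deriv (κ t)))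
    (hκpde : ∀ t x : ℝ,
      deriv (fun s => κ s x) t
        = -deriv V x * deriv (κ t) x + σ ^ 2 / 2 * deriv (deriv (κ t)) x
          + 2 / σ ^ 2 * deriv V x * h t)
    (hpt : ∀ x : ℝ, Differentiable ℝ (fun t => p t x))
    (hpx : ∀ t : ℝ, Differentiable ℝ (p t))
    (hpxx : ∀ t : ℝ, Differentiable ℝ (deriv (p t)))
    (hFPE : ∀ t x : ℝ,
      deriv (fun s => p s x) t
        = -(deriv (fun y => (-deriv V y + ε * h t) * p t y) x)
          + σ ^ 2 / 2 * deriv (deriv (p t)) x) :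
    ∀ t x : ℝ,
      deriv (fun s => p s x - ptilde σ ε V κ s x) t
        = deriv (fun y => deriv V y * (p t y - ptilde σ ε V κ t y)) x
          + σ ^ 2 / 2 * deriv (deriv (fun y => p t y - ptilde σ ε V κ t y)) x
          - ε * h t * deriv (fun y => p t y - ptilde σ ε V κ t y) x
          - ε ^ 2 * h t * (deriv (phat σ V) x * κ t x + phat σ V x * deriv (κ t) x) := by
  intro t x
  have hσ2 : (σ : ℝ) ^ 2 ≠ 0 := pow_ne_zero 2 hσ.ne'
  have hVd : ∀ y, HasDerivAt V (deriv V y) y := fun y => (hV y).hasDerivAt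
  have hV'd : ∀ y, HasDerivAt (deriv V) (deriv (deriv V) y) y := fun y => (hV' y).hasDerivAt
  -- derivative of phat
  have hPd : ∀ y, HasDerivAt (phat σ V)
      (phat σ V y * (-(2 / σ ^ 2) * deriv V y)) y := by
    intro y
    unfold phat
    exact ((hVd y).const_mul (-(2 / σ ^ 2))).exp
  -- spatial derivative of ptilde t
  have hTd : ∀ y, HasDerivAt (fun z => ptilde σ ε V κ t z)
      (phat σ V y * (-(2 / σ ^ 2) * deriv V y)
        + (ε * (phat σ V y * (-(2 / σ ^ 2) * deriv V y)) * κ t y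
            + ε * phat σ V y * deriv (κ t) y)) y := by
    intro y
    have h2 : HasDerivAt (fun z => ε * phat σ V z * κ t z)
        (ε * (phat σ V y * (-(2 / σ ^ 2) * deriv V y)) * κ t y
          + ε * phat σ V y * deriv (κ t) y) y :=
      ((hPd y).const_mul ε).mul ((hκx t y).hasDerivAt)
    unfold ptilde
    exact (hPd y).add h2
  -- spatial derivative of q t
  have hQd : ∀ y, HasDerivAt (fun z => p t z - ptilde σ ε V κ t z)
      (deriv (p t) y
        - (phat σ V y * (-(2 / σ ^ 2) * deriv V y)
            + (ε * (phat σ V y * (-(2 / σ ^ 2) * deriv V y)) * κ t y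
                + ε * phat σ V y * deriv (κ t) y))) y :=
    fun y => ((hpx t y).hasDerivAt).sub (hTd y)
  have hQderiv : deriv (fun z => p t z - ptilde σ ε V κ t z)
      = fun y => deriv (p t) y
        - (phat σ V y * (-(2 / σ ^ 2) * deriv V y)
            + (ε * (phat σ V y * (-(2 / σ ^ 2) * deriv V y)) * κ t y
                + ε * phat σ V y * deriv (κ t) y)) :=
    funext fun y => (hQd y).deriv
  -- second spatial derivative of q t
  have hg1 : ∀ y, HasDerivAt (fun z => phat σ V z * (-(2 / σ ^ 2) * deriv V z))
      (phat σ V y * (-(2 / σ ^ 2) * deriv V y) * (-(2 / σ ^ 2) * deriv V y)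
        + phat σ V y * (-(2 / σ ^ 2) * deriv (deriv V) y)) y :=
    fun y => (hPd y).mul ((hV'd y).const_mul (-(2 / σ ^ 2)))
  have hg2 : ∀ y, HasDerivAt
      (fun z => ε * (phat σ V z * (-(2 / σ ^ 2) * deriv V z)) * κ t z)
      (ε * (phat σ V y * (-(2 / σ ^ 2) * deriv V y) * (-(2 / σ ^ 2) * deriv V y)
          + phat σ V y * (-(2 / σ ^ 2) * deriv (deriv V) y)) * κ t y
        + ε * (phat σ V y * (-(2 / σ ^ 2) * deriv V y)) * deriv (κ t) y) y := by
    intro y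
    exact ((hg1 y).const_mul ε).mul ((hκx t y).hasDerivAt)
  have hg3 : ∀ y, HasDerivAt (fun z => ε * phat σ V z * deriv (κ t) z)
      (ε * (phat σ V y * (-(2 / σ ^ 2) * deriv V y)) * deriv (κ t) y
        + ε * phat σ V y * deriv (deriv (κ t)) y) y := by
    intro y
    exact ((hPd y).const_mul ε).mul ((hκxx t y).hasDerivAt)
  have hQ2 : deriv (deriv (fun z => p t z - ptilde σ ε V κ t z)) x
      = deriv (deriv (p t)) x
        - ((phat σ V x * (-(2 / σ ^ 2) * deriv V x) * (-(2 / σ ^ 2) * deriv V x)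
              + phat σ V x * (-(2 / σ ^ 2) * deriv (deriv V) x))
            + ((ε * (phat σ V x * (-(2 / σ ^ 2) * deriv V x) * (-(2 / σ ^ 2) * deriv V x)
                  + phat σ V x * (-(2 / σ ^ 2) * deriv (deriv V) x)) * κ t x
                + ε * (phat σ V x * (-(2 / σ ^ 2) * deriv V x)) * deriv (κ t) x)
              + (ε * (phat σ V x * (-(2 / σ ^ 2) * deriv V x)) * deriv (κ t) x
                + ε * phat σ V x * deriv (deriv (κ t)) x))) := by
    rw [hQderiv]
    exact (((hpxx t x).hasDerivAt).sub ((hg1 x).add ((hg2 x).add (hg3 x)))).deriv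
  -- time derivative of q
  have hLt : deriv (fun s => p s x - ptilde σ ε V κ s x) t
      = deriv (fun s => p s x) t - ε * phat σ V x * deriv (fun s => κ s x) t := by
    have h2 : HasDerivAt (fun s => ptilde σ ε V κ s x)
        (ε * phat σ V x * deriv (fun s => κ s x) t) t := by
      unfold ptilde
      exact ((hκt x t).hasDerivAt.const_mul (ε * phat σ V x)).const_add (phat σ V x)
    exact (((hpt x t).hasDerivAt).sub h2).deriv
  -- derivative of V' * q
  have hVQ : deriv (fun y => deriv V y * (p t y - ptilde σ ε V κ t y)) x
      = deriv (deriv V) x * (p t x - ptilde σ ε V κ t x)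
        + deriv V x * (deriv (p t) x
            - (phat σ V x * (-(2 / σ ^ 2) * deriv V x)
                + (ε * (phat σ V x * (-(2 / σ ^ 2) * deriv V x)) * κ t x
                    + ε * phat σ V x * deriv (κ t) x))) :=
    ((hV'd x).mul (hQd x)).deriv
  -- derivative of the flux in the FPE
  have hFx : deriv (fun y => (-deriv V y + ε * h t) * p t y) x
      = -deriv (deriv V) x * p t x + (-deriv V x + ε * h t) * deriv (p t) x :=
    (((hV'd x).neg.add_const (ε * h t)).mul ((hpx t x).hasDerivAt)).deriv
  rw [hLt, hVQ, hQ2, (hQd x).deriv, (hPd x).deriv, hFPE t x, hFx, hκpde t x]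
  simp only [ptilde]
  field_simp
  ring
end

section
/- Let X be a real Banach space, let T : X → X be a bounded linear operator, let n > 0 be a real number, and let M ≥ 0 be such that ‖n^k T^k‖ ≤ M for every natural number k (i.e., M is an upper bound for sup_k ‖n^k T^k‖). Then for every τ ≥ 0, the operator exp(n² τ T) ∘ T² (where exp denotes the operator exponential given by the norm-convergent series Σ_{k≥0} (n² τ)^k T^k / k!) satisfies the bound ‖exp(n² τ T) ∘ T²‖ ≤ M e^{n τ} / n². -/
/-!
Expanding the exponential, `exp(aT) T² = ∑ (a^k / k!) T^(k+2)` with `a = n²τ`. The power bound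
gives `‖T^(k+2)‖ ≤ M / n^(k+2)`, so the `k`-th term has norm at most `(M / n²) (a/n)^k / k!`,
and these majorants sum to `(M / n²) e^(a/n) = (M / n²) e^(nτ)`.
-/

open NormedSpace Nat

theorem norm_le_div_of_norm_smul_le {E : Type*} [NormedAddCommGroup E] [NormedSpace ℝ E]
    {c M : ℝ} (hc : 0 < c) {x : E} (h : ‖c • x‖ ≤ M) : ‖x‖ ≤ M / c := by
  rw [le_div_iff₀ hc, mul_comm]
  rwa [norm_smul, Real.norm_of_nonneg hc.le] at h

section NormedAlgebra

variable {A : Type*} [NormedRing A] [NormedAlgebra ℝ A]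

theorem norm_smul_pow_mul_sq_le {T : A} {n M a : ℝ} (hn : 0 < n) (ha : 0 ≤ a)
    (hbound : ∀ k : ℕ, ‖n ^ k • T ^ k‖ ≤ M) (k : ℕ) :
    ‖(a • T) ^ k * T ^ 2‖ ≤ M / n ^ 2 * (a / n) ^ k := by
  rw [smul_pow, smul_mul_assoc, ← pow_add, norm_smul, Real.norm_of_nonneg (by positivity)]
  calc a ^ k * ‖T ^ (k + 2)‖ ≤ a ^ k * (M / n ^ (k + 2)) := by
        gcongr
        exact norm_le_div_of_norm_smul_le (by positivity) (hbound _)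
    _ = M / n ^ 2 * (a / n) ^ k := by
        rw [div_pow, pow_add]
        field_simp

theorem norm_exp_mul_le_of_norm_pow_mul_le [CompleteSpace A] {x y : A} {C r : ℝ}
    (h : ∀ k : ℕ, ‖x ^ k * y‖ ≤ C * r ^ k) : ‖exp x * y‖ ≤ C * Real.exp r := by
  have hexp : HasSum (fun k : ℕ => ((k !⁻¹ : ℝ) • x ^ k) * y) (exp x * y) :=
    (exp_series_hasSum_exp' (𝕂 := ℝ) x).mul_right y
  have hreal : HasSum (fun k : ℕ => C * (r ^ k / k !)) (C * Real.exp r) := by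
    simpa only [Real.exp_eq_exp_ℝ] using (expSeries_div_hasSum_exp r).mul_left C
  refine hexp.norm_le_of_bounded hreal fun k => ?_
  rw [smul_mul_assoc, norm_smul, Real.norm_of_nonneg (by positivity)]
  calc (k !⁻¹ : ℝ) * ‖x ^ k * y‖ ≤ (k !⁻¹ : ℝ) * (C * r ^ k) := by gcongr; exact h k
    _ = C * (r ^ k / k !) := by ring

end NormedAlgebra

theorem exp_comp_sq_norm_bound_general
    {X : Type*} [NormedAddCommGroup X] [NormedSpace ℝ X] [CompleteSpace X]
    (T : X →L[ℝ] X) (n : ℝ) (hn : 0 < n) (M : ℝ)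
    (hbound : ∀ k : ℕ, ‖(n ^ k) • T ^ k‖ ≤ M) :
    ∀ τ : ℝ, 0 ≤ τ →
      ‖(NormedSpace.exp ((n ^ 2 * τ) • T)).comp (T ^ 2)‖
        ≤ M * Real.exp (n * τ) / n ^ 2 := by
  intro τ hτ
  have hterm := norm_smul_pow_mul_sq_le hn (by positivity : 0 ≤ n ^ 2 * τ) hbound
  rw [show n ^ 2 * τ / n = n * τ by field_simp] at hterm
  -- `f.comp g` is, by definition, the product `f * g` in the algebra `X →L[ℝ] X`.
  calc ‖(exp ((n ^ 2 * τ) • T)).comp (T ^ 2)‖ ≤ M / n ^ 2 * Real.exp (n * τ) :=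
        norm_exp_mul_le_of_norm_pow_mul_le hterm
    _ = M * Real.exp (n * τ) / n ^ 2 := by ring

/-- If `T` is a bounded operator on a Banach space with `‖n^k T^k‖ ≤ M` for all
`k`, then for every `τ ≥ 0` one has `‖exp(n² τ T) ∘ T²‖ ≤ M e^{n τ} / n²`. -/
theorem exp_comp_sq_norm_bound
    {X : Type*} [NormedAddCommGroup X] [NormedSpace ℝ X] [CompleteSpace X]
    (T : X →L[ℝ] X) (n : ℝ) (hn : 0 < n) (M : ℝ) (hM : 0 ≤ M)
    (hbound : ∀ k : ℕ, ‖(n ^ k) • T ^ k‖ ≤ M) :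
    ∀ τ : ℝ, 0 ≤ τ →
      ‖(NormedSpace.exp ((n ^ 2 * τ) • T)).comp (T ^ 2)‖
        ≤ M * Real.exp (n * τ) / n ^ 2 :=
  exp_comp_sq_norm_bound_general T n hn M hbound
end
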